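/- Let k be an algebraically closed field of characteristic 0 and let f ∈ k[x₁,...,xₙ] be an irreducible homogeneous polynomial of degree d ≥ 2. Suppose A₁,...,Aₙ are m×m matrices over k satisfying (x₁A₁ + ⋯ + xₙAₙ)^d = f(x₁,...,xₙ)·I_m in Mat_m(k[x₁,...,xₙ]). Then d divides m. -/

import Mathlib

/-!
Taking determinants of `(∑ xᵢ Aᵢ)^d = f • 1` gives `det(∑ xᵢ Aᵢ)^d = f^m`. Since `f` is prime
in the factorial ring `k[x₁,…,xₙ]`, comparing the multiplicities of `f` on both sides gives
`m = d · v_f(det(∑ xᵢ Aᵢ))`.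
-/

open MvPolynomial

theorem ENat.dvd_of_natCast_eq_mul {d m : ℕ} {e : ℕ∞} (h : (m : ℕ∞) = d * e) : d ∣ m := by
  induction e using ENat.recTopCoe with
  | top =>
    rcases eq_or_ne d 0 with rfl | hd
    · simp_all
    · simp [hd] at h
  | coe e => exact ⟨e, by exact_mod_cast h⟩

theorem Prime.dvd_of_pow_eq_pow {M : Type*} [CommMonoidWithZero M] [IsCancelMulZero M]
    {p g : M} (hp : Prime p) {d m : ℕ} (h : g ^ d = p ^ m) : d ∣ m := by
  have hmult := emultiplicity_pow (a := g) hp (k := d)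
  rw [h, emultiplicity_pow_self_of_prime hp] at hmult
  exact ENat.dvd_of_natCast_eq_mul hmult

theorem Matrix.det_pow_eq_of_pow_eq_smul_one {ι R : Type*} [Fintype ι] [DecidableEq ι]
    [CommRing R] {L : Matrix ι ι R} {f : R} {d : ℕ} (h : L ^ d = f • 1) :
    L.det ^ d = f ^ Fintype.card ι := by
  rw [← det_pow, h, det_smul, det_one, mul_one]

theorem dim_of_clifford_representation_divisible_by_deg_general
    (k : Type) [Field k]
    (n d m : ℕ)
    (f : MvPolynomial (Fin n) k)
    (hf_irr : Irreducible f)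
    (A : Fin n → Matrix (Fin m) (Fin m) k)
    (hrep : (∑ i : Fin n, (X i : MvPolynomial (Fin n) k) •
        (A i).map (C : k →+* MvPolynomial (Fin n) k)) ^ d
      = f • (1 : Matrix (Fin m) (Fin m) (MvPolynomial (Fin n) k))) :
    d ∣ m := by
  have hdet := Matrix.det_pow_eq_of_pow_eq_smul_one hrep
  rw [Fintype.card_fin] at hdet
  exact (UniqueFactorizationMonoid.irreducible_iff_prime.mp hf_irr).dvd_of_pow_eq_pow hdet

theorem dim_of_clifford_representation_divisible_by_deg
    (k : Type) [Field k] [IsAlgClosed k] [CharZero k]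
    (n d m : ℕ) (hd : 2 ≤ d)
    (f : MvPolynomial (Fin n) k)
    (hf_irr : Irreducible f) (hf_hom : f.IsHomogeneous d)
    (A : Fin n → Matrix (Fin m) (Fin m) k)
    (hrep : (∑ i : Fin n, (X i : MvPolynomial (Fin n) k) •
        (A i).map (C : k →+* MvPolynomial (Fin n) k)) ^ d
      = f • (1 : Matrix (Fin m) (Fin m) (MvPolynomial (Fin n) k))) :
    d ∣ m :=
  dim_of_clifford_representation_divisible_by_deg_general k n d m f hf_irr A hrep
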